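/- Let f : ℝ → ℝ be 1-periodic with 0 ≤ f(x) ≤ 3/20 for all x, Lipschitz with |f(x)−f(y)| ≤ (3/10)·|x−y| for all x,y, with min f = 0, and suppose L := ∫₀¹ f(x) dx satisfies 0 < L < 3/40. Then ∫₀¹ ∫_ℝ λ(f(x), f(y), x−y) dy dx ≥ L⁶/20. -/

import Mathlib

/-!
Where `f x ≥ L/2`, the inner integral is at least `5L⁵/96`: periodicity puts a zero `z` of `f`
within distance `1/2` of `x`, the Lipschitz bound gives `f ≤ L/4` on the interval of radius `5L/6`
around `z`, and there `f x ± f y ≥ L/4` while both denominators of `λ` are at most `1/2`, so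
`λ ≥ L⁴/32`. Since `f ≤ 3/20` and `f` has mean `L`, the set `{f ≥ L/2}` has measure at
least `10L/3` in a period, which gives `∫₀¹ ∫ λ ≥ 5L⁵/96 · 10L/3 ≥ L⁶/20`.
The bound
`λ(a,b,c) ≤ 1/(2(1+c²))` makes all the integrals finite.
-/

open MeasureTheory Set

/-- `λ(a,b,c) := (a+b)²·(a−b)² / (2·(c² + (a+b)²)·(c² + (a−b)²))`. -/
noncomputable def lam (a b c : ℝ) : ℝ :=
  (a + b) ^ 2 * (a - b) ^ 2 / (2 * (c ^ 2 + (a + b) ^ 2) * (c ^ 2 + (a - b) ^ 2))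

lemma lam_nonneg (a b c : ℝ) : 0 ≤ lam a b c := by unfold lam; positivity

lemma lam_le (a b c : ℝ) (hab : (a + b) ^ 2 ≤ 1) : lam a b c ≤ (1 + c ^ 2)⁻¹ / 2 := by
  rw [show (1 + c ^ 2)⁻¹ / 2 = 1 / (2 * (1 + c ^ 2)) by field_simp, lam]
  rcases (by positivity : 0 ≤ (c ^ 2 + (a + b) ^ 2) * (c ^ 2 + (a - b) ^ 2)).eq_or_lt with h | h
  · rw [mul_assoc, ← h, mul_zero, div_zero]; positivity
  rw [div_le_div_iff₀ (by linarith) (by positivity)]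
  nlinarith [mul_le_mul_of_nonneg_right hab (mul_nonneg (sq_nonneg (a - b)) (sq_nonneg c)),
    mul_nonneg (sq_nonneg c) (sq_nonneg (a + b)), mul_nonneg (sq_nonneg c) (sq_nonneg (a - b)),
    pow_nonneg (sq_nonneg c) 2]

lemma div_le_lam {a b c p q D E : ℝ} (hp : 0 < p) (hq : 0 < q) (hpa : p ≤ (a + b) ^ 2)
    (hqb : q ≤ (a - b) ^ 2) (hD : c ^ 2 + (a + b) ^ 2 ≤ D) (hE : c ^ 2 + (a - b) ^ 2 ≤ E) :
    p * q / (2 * D * E) ≤ lam a b c := by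
  have hD₀ : 0 < c ^ 2 + (a + b) ^ 2 := by nlinarith [sq_nonneg c]
  have hE₀ : 0 < c ^ 2 + (a - b) ^ 2 := by nlinarith [sq_nonneg c]
  unfold lam
  gcongr
  linarith

theorem Function.Periodic.exists_apply_eq_abs_sub_le_half {α : Type*} {f : ℝ → α} {p : ℝ}
    (hf : Function.Periodic f p) (hp : 0 < p) (x₀ x : ℝ) :
    ∃ z, f z = f x₀ ∧ |x - z| ≤ p / 2 := by
  set n := round ((x - x₀) / p)
  refine ⟨x₀ + n * p, hf.int_mul n x₀, ?_⟩
  have h := abs_sub_round ((x - x₀) / p)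
  rw [show x - (x₀ + n * p) = ((x - x₀) / p - n) * p by field_simp; ring, abs_mul,
    abs_of_pos hp]
  nlinarith

/-- A reverse Markov inequality, from `f ≤ t + (M - t) • 𝟙{t ≤ f}` on `s`. -/
theorem integral_le_add_mul_measureReal_setOf_le {α : Type*} [MeasurableSpace α] {μ : Measure α}
    {s : Set α} {f : α → ℝ} {t M : ℝ} (hs : MeasurableSet s) (hμs : μ s ≠ ⊤)
    (hf : Measurable f) (hfs : IntegrableOn f s μ) (hM : ∀ x ∈ s, f x ≤ M) :
    ∫ x in s, f x ∂μ ≤ t * μ.real s + (M - t) * μ.real (s ∩ {x | t ≤ f x}) := by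
  have hlev : MeasurableSet {x | t ≤ f x} := measurableSet_le measurable_const hf
  have hdom : ∀ x ∈ s, f x ≤ t + {x | t ≤ f x}.indicator (fun _ ↦ M - t) x := by
    intro x hx
    by_cases hx' : t ≤ f x
    · simp [indicator_of_mem (show x ∈ {x | t ≤ f x} from hx'), hM x hx]
    · simp [indicator_of_notMem (show x ∉ {x | t ≤ f x} from hx')]; linarith
  have : IsFiniteMeasure (μ.restrict s) := isFiniteMeasure_restrict.2 hμs
  have hind : Integrable ({x | t ≤ f x}.indicator fun _ ↦ M - t) (μ.restrict s) :=
    (integrable_const (M - t)).indicator hlev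
  calc ∫ x in s, f x ∂μ
      ≤ ∫ x in s, (t + {x | t ≤ f x}.indicator (fun _ ↦ M - t) x) ∂μ :=
        setIntegral_mono_on hfs ((integrable_const t).add hind) hs hdom
    _ = t * μ.real s + (M - t) * μ.real (s ∩ {x | t ≤ f x}) := by
        rw [integral_add (integrable_const t) hind, integral_const, integral_indicator_const _ hlev,
          measureReal_restrict_apply hlev, measureReal_restrict_apply_univ, inter_comm,
          smul_eq_mul, smul_eq_mul, mul_comm, mul_comm (M - t)]

noncomputable def dissipationDensity (f : ℝ → ℝ) (x : ℝ) : ℝ :=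
  ∫ y, lam (f x) (f y) (x - y)

section Density

variable {f : ℝ → ℝ}

theorem measurable_lam_comp (hf : Measurable f) :
    Measurable fun p : ℝ × ℝ ↦ lam (f p.1) (f p.2) (p.1 - p.2) := by
  unfold lam; fun_prop

theorem lam_comp_le (hf : ∀ x, |f x| ≤ 1 / 2) (x y : ℝ) :
    lam (f x) (f y) (x - y) ≤ (1 + (x - y) ^ 2)⁻¹ / 2 :=
  lam_le _ _ _ <| sq_le_one_iff_abs_le_one _ |>.2 <|
    (abs_add_le _ _).trans (by linarith [hf x, hf y])

theorem integrable_lam_comp (hf : Measurable f) (hf_abs : ∀ x, |f x| ≤ 1 / 2) (x : ℝ) :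
    Integrable fun y ↦ lam (f x) (f y) (x - y) := by
  refine Integrable.mono' (((integrable_comp_sub_left (fun z : ℝ ↦ (1 + z ^ 2)⁻¹) x).2
    integrable_inv_one_add_sq).div_const 2)
    ((measurable_lam_comp hf).comp measurable_prodMk_left).aestronglyMeasurable
    (ae_of_all _ fun y ↦ ?_)
  rw [Real.norm_of_nonneg (lam_nonneg _ _ _)]
  exact lam_comp_le hf_abs x y

theorem dissipationDensity_nonneg (x : ℝ) : 0 ≤ dissipationDensity f x :=
  integral_nonneg fun _ ↦ lam_nonneg _ _ _

theorem dissipationDensity_le (hf : Measurable f) (hf_abs : ∀ x, |f x| ≤ 1 / 2) (x : ℝ) :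
    dissipationDensity f x ≤ Real.pi / 2 := by
  calc dissipationDensity f x ≤ ∫ y, (1 + (x - y) ^ 2)⁻¹ / 2 :=
        integral_mono (integrable_lam_comp hf hf_abs x) (((integrable_comp_sub_left
          (fun z : ℝ ↦ (1 + z ^ 2)⁻¹) x).2 integrable_inv_one_add_sq).div_const 2)
          (lam_comp_le hf_abs x)
    _ = Real.pi / 2 := by
        rw [integral_div, integral_sub_left_eq_self (fun z : ℝ ↦ (1 + z ^ 2)⁻¹) volume x,
          integral_univ_inv_one_add_sq]

theorem integrableOn_dissipationDensity (hf : Measurable f) (hf_abs : ∀ x, |f x| ≤ 1 / 2)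
    {s : Set ℝ} (hs : volume s ≠ ⊤) : IntegrableOn (dissipationDensity f) s := by
  have : IsFiniteMeasure (volume.restrict s) := isFiniteMeasure_restrict.2 hs
  refine Integrable.of_bound
    (measurable_lam_comp hf).stronglyMeasurable.integral_prod_right'.aestronglyMeasurable
    (Real.pi / 2) (ae_of_all _ fun x ↦ ?_)
  rw [Real.norm_of_nonneg (dissipationDensity_nonneg x)]
  exact dissipationDensity_le hf hf_abs x

theorem le_dissipationDensity {L x z : ℝ} (hf : Measurable f)
    (hbd : ∀ x, 0 ≤ f x ∧ f x ≤ 3 / 20)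
    (hlip : ∀ x y : ℝ, |f x - f y| ≤ (3 / 10) * |x - y|) (hz : f z = 0)
    (hxz : |x - z| ≤ 1 / 2) (hL0 : 0 < L) (hL1 : L < 3 / 40) (hx : L / 2 ≤ f x) :
    5 * L ^ 5 / 96 ≤ dissipationDensity f x := by
  set r := 5 * L / 6 with hr
  have hlam : ∀ y ∈ Icc (z - r) (z + r), L ^ 4 / 32 ≤ lam (f x) (f y) (x - y) := by
    intro y hy
    have hyz : |y - z| ≤ r := abs_sub_le_iff.2 ⟨by linarith [hy.2], by linarith [hy.1]⟩
    have hfy : f y ≤ L / 4 := by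
      have := hlip y z
      rw [hz, sub_zero, abs_of_nonneg (hbd y).1] at this
      linarith [hr]
    have hxy : (x - y) ^ 2 ≤ (9 / 16) ^ 2 := by
      rw [← sq_abs]
      gcongr
      linarith [abs_sub_le x z y, abs_sub_comm z y, hr]
    have hsum : (f x + f y) ^ 2 ≤ (3 / 10) ^ 2 := by gcongr <;> linarith [hbd x, hbd y]
    have hdiff : (f x - f y) ^ 2 ≤ (3 / 10) ^ 2 := by gcongr <;> linarith [hbd x, hbd y]
    calc L ^ 4 / 32 = (L / 2) ^ 2 * (L / 4) ^ 2 / (2 * (1 / 2) * (1 / 2)) := by ring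
      _ ≤ lam (f x) (f y) (x - y) := by
        apply div_le_lam (by positivity) (by positivity) _ _ (by linarith) (by linarith)
        · gcongr; linarith [hbd y]
        · gcongr; linarith
  have hf_abs : ∀ y, |f y| ≤ 1 / 2 := fun y ↦
    abs_le.2 ⟨by linarith [hbd y], by linarith [hbd y]⟩
  calc 5 * L ^ 5 / 96 = L ^ 4 / 32 * volume.real (Icc (z - r) (z + r)) := by
        rw [Real.volume_real_Icc_of_le (by linarith [hr])]; ring
    _ ≤ ∫ y in Icc (z - r) (z + r), lam (f x) (f y) (x - y) :=
        setIntegral_ge_of_const_le_real measurableSet_Icc measure_Icc_lt_top.ne hlam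
          (integrable_lam_comp hf hf_abs x).integrableOn
    _ ≤ dissipationDensity f x :=
        setIntegral_le_integral (integrable_lam_comp hf hf_abs x)
          (ae_of_all _ fun _ ↦ lam_nonneg _ _ _)

end Density

/-- Lower bound on the dissipation functional for a 1-periodic interface with small slope,
values in `[0, 3/20]`, minimum `0`, and mean `L ∈ (0, 3/40)`. -/
theorem dissipation_lower_bound
    (f : ℝ → ℝ)
    (hper : ∀ x, f (x + 1) = f x)
    (hbd : ∀ x, 0 ≤ f x ∧ f x ≤ 3 / 20)
    (hlip : ∀ x y : ℝ, |f x - f y| ≤ (3 / 10) * |x - y|)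
    (hmin : ∃ x₀, f x₀ = 0)
    (L : ℝ) (hL : L = ∫ x in (0:ℝ)..1, f x)
    (hL0 : 0 < L) (hL1 : L < 3 / 40) :
    L ^ 6 / 20 ≤ ∫ x in (0:ℝ)..1, (∫ y : ℝ, lam (f x) (f y) (x - y)) := by
  obtain ⟨x₀, hx₀⟩ := hmin
  have hcont : Continuous f := (LipschitzWith.of_dist_le_mul (K := 3 / 10) fun x y ↦ by
    simpa [Real.dist_eq] using hlip x y).continuous
  have hf : Measurable f := hcont.measurable
  have hf_abs : ∀ y, |f y| ≤ 1 / 2 := fun y ↦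
    abs_le.2 ⟨by linarith [hbd y], by linarith [hbd y]⟩
  set A := Ioc (0 : ℝ) 1 ∩ {x | L / 2 ≤ f x}
  have hAmeas : MeasurableSet A := measurableSet_Ioc.inter (measurableSet_le measurable_const hf)
  have hAfin : volume A ≠ ⊤ :=
    (measure_Ioc_lt_top.trans_le' (measure_mono inter_subset_left)).ne
  have hA : 10 * L / 3 ≤ volume.real A := by
    have := integral_le_add_mul_measureReal_setOf_le (μ := volume) (s := Ioc 0 1) (t := L / 2)
      measurableSet_Ioc measure_Ioc_lt_top.ne hf hcont.integrableOn_Ioc fun x _ ↦ (hbd x).2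
    rw [← intervalIntegral.integral_of_le zero_le_one, ← hL,
      Real.volume_real_Ioc_of_le zero_le_one] at this
    nlinarith [measureReal_nonneg (μ := volume) (s := A)]
  have hdens : ∀ x ∈ A, 5 * L ^ 5 / 96 ≤ dissipationDensity f x := fun x hx ↦ by
    obtain ⟨z, hz, hxz⟩ := Function.Periodic.exists_apply_eq_abs_sub_le_half hper one_pos x₀ x
    exact le_dissipationDensity hf hbd hlip (hz.trans hx₀) hxz hL0 hL1 hx.2
  calc L ^ 6 / 20 ≤ 5 * L ^ 5 / 96 * (10 * L / 3) := by nlinarith [pow_pos hL0 6]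
    _ ≤ 5 * L ^ 5 / 96 * volume.real A := by gcongr
    _ ≤ ∫ x in A, dissipationDensity f x :=
        setIntegral_ge_of_const_le_real hAmeas hAfin hdens
          (integrableOn_dissipationDensity hf hf_abs hAfin)
    _ ≤ ∫ x in Ioc 0 1, dissipationDensity f x :=
        setIntegral_mono_set (integrableOn_dissipationDensity hf hf_abs measure_Ioc_lt_top.ne)
          (ae_of_all _ dissipationDensity_nonneg) inter_subset_left.eventuallyLE
    _ = ∫ x in (0:ℝ)..1, dissipationDensity f x :=
        (intervalIntegral.integral_of_le zero_le_one).symm
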